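/- Let f : ℤ → ℝ be nonnegative with bounded variation, let L be a positive even integer, and let [x,y] be an interval of length L. Let 𝕡_i = {p_i < r_i < q_i}, 1 ≤ i ≤ m, be essential peaks for f lying entirely in [x,y] (x ≤ p_1, q_m ≤ y, with q_i ≤ p_{i+1}) and satisfying 32L < ω(r_i) ≤ 64L. Define e_1 = p_1, e_{m+1} = q_m, and for 2 ≤ i ≤ m set e_i = p_i if Mf(p_i) ≤ Mf(q_{i−1}) and e_i = q_{i−1} otherwise. Then for each 1 ≤ i ≤ m there exist integers s_i and t_i with x − 64L ≤ s_i ≤ x − 30L, y + 30L ≤ t_i ≤ y + 64L, f(s_i) ≥ Mf(e_{i+1}) + ((Mf(r_i) − Mf(e_{i+1}))/(e_{i+1} − r_i))·ω(r_i), and f(t_i) ≥ Mf(e_i) + ((Mf(r_i) − Mf(e_i))/(r_i − e_i))·ω(r_i). -/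

import Mathlib

open Finset

noncomputable section

/-- Average of `f : ℤ → ℝ` over the integer interval `[x, y]`:
`A_{x,y} f = (1/(y-x+1)) ∑_{k=x}^{y} f(k)`. -/
def avg (f : ℤ → ℝ) (x y : ℤ) : ℝ :=
  (∑ k ∈ Finset.Icc x y, f k) / ((y - x + 1 : ℤ) : ℝ)

/-- The discrete centered Hardy–Littlewood maximal function
`Mf(n) = sup_{r ≥ 0} (1/(2r+1)) ∑_{k=-r}^{r} |f(n+k)|`. -/
def dM (f : ℤ → ℝ) (n : ℤ) : ℝ :=
  ⨆ r : ℕ, avg (fun k => |f k|) (n - r) (n + r)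

/-- The total variation `Var f = ∑_{k ∈ ℤ} |f(k+1) - f(k)|`. -/
def dVar (f : ℤ → ℝ) : ℝ := ∑' k : ℤ, |f (k + 1) - f k|

/-- `f` has bounded variation. -/
def BddVar (f : ℤ → ℝ) : Prop := Summable fun k : ℤ => |f (k + 1) - f k|

/-- A peak for `f`: integers `p < r < q` with `Mf(p) < Mf(r)` and `Mf(q) < Mf(r)`. -/
def IsPeak (f : ℤ → ℝ) (p r q : ℤ) : Prop :=
  p < r ∧ r < q ∧ dM f p < dM f r ∧ dM f q < dM f r

/-- The variation of a peak `{p < r < q}`: `2·Mf(r) - Mf(p) - Mf(q)`. -/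
def peakVar (f : ℤ → ℝ) (p r q : ℤ) : ℝ := 2 * dM f r - dM f p - dM f q

/-- An essential peak: `max_{p<k<q} f(k) ≤ Mf(r) - (1/4)·Var{p,r,q}`. -/
def IsEssentialPeak (f : ℤ → ℝ) (p r q : ℤ) : Prop :=
  IsPeak f p r q ∧
    ∀ k : ℤ, p < k → k < q → f k ≤ dM f r - (1 / 4) * peakVar f p r q

/-- `w` is the radius `ω(r)` of an (essential) peak with center `r`:
the largest integer `w > 0` with `A_w f(r) = Mf(r)`. -/
def IsRadius (f : ℤ → ℝ) (r w : ℤ) : Prop :=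
  0 < w ∧ avg f (r - w) (r + w) = dM f r ∧
    ∀ w' : ℤ, 0 < w' → avg f (r - w') (r + w') = dM f r → w' ≤ w

-- telescoping
lemma tele (f : ℤ → ℝ) (a : ℤ) (n : ℕ) :
    f (a + n) - f a = ∑ i ∈ Finset.range n, (f (a + i + 1) - f (a + i)) := by
  induction n with
  | zero => simp
  | succ k ih =>
    rw [Finset.sum_range_succ, ← ih]
    push_cast
    ring_nf

lemma abs_sub_le_var (f : ℤ → ℝ) (hbv : BddVar f) (a : ℤ) (n : ℕ) :
    |f (a + n) - f a| ≤ dVar f := by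
  rw [tele f a n]
  calc |∑ i ∈ Finset.range n, (f (a + i + 1) - f (a + i))|
      ≤ ∑ i ∈ Finset.range n, |f (a + i + 1) - f (a + i)| :=
        Finset.abs_sum_le_sum_abs _ _
    _ = ∑ k ∈ (Finset.range n).image (fun i : ℕ => a + (i : ℤ)), |f (k + 1) - f k| := by
        rw [Finset.sum_image (by intro i _ j _ h; have h' : a + (i:ℤ) = a + (j:ℤ) := h; omega)]
    _ ≤ dVar f := Summable.sum_le_tsum _ (fun _ _ => abs_nonneg _) hbv

lemma f_le_bound (f : ℤ → ℝ) (hbv : BddVar f) (n : ℤ) : f n ≤ f 0 + dVar f := by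
  rcases le_or_gt 0 n with h | h
  · have := abs_sub_le_var f hbv 0 n.toNat
    rw [Int.toNat_of_nonneg h] at this
    simp only [zero_add] at this
    have := le_of_abs_le this
    linarith
  · have := abs_sub_le_var f hbv n (-n).toNat
    rw [Int.toNat_of_nonneg (by omega)] at this
    have h0 : n + -n = 0 := by ring
    rw [h0] at this
    have := neg_le_of_abs_le this
    linarith

lemma avg_le_of_forall_le (f : ℤ → ℝ) (B : ℝ) (hB : ∀ k, f k ≤ B) (a b : ℤ)
    (hab : a ≤ b) : avg f a b ≤ B := by
  have hcard : ((Finset.Icc a b).card : ℝ) = ((b - a + 1 : ℤ) : ℝ) := by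
    have h1 : ((Finset.Icc a b).card : ℤ) = b - a + 1 := by
      rw [Int.card_Icc, Int.toNat_of_nonneg (by omega)]; ring
    exact_mod_cast h1
  have hpos : (0 : ℝ) < ((b - a + 1 : ℤ) : ℝ) := by exact_mod_cast (by omega : (0:ℤ) < b - a + 1)
  have hsum : ∑ k ∈ Finset.Icc a b, f k ≤ ((b - a + 1 : ℤ) : ℝ) * B := by
    calc ∑ k ∈ Finset.Icc a b, f k ≤ (Finset.Icc a b).card • B :=
          Finset.sum_le_card_nsmul _ _ _ (fun k _ => hB k)
      _ = ((b - a + 1 : ℤ) : ℝ) * B := by rw [nsmul_eq_mul, hcard]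
  rw [avg, div_le_iff₀ hpos]
  linarith

lemma dM_eq (f : ℤ → ℝ) (hf : ∀ n, 0 ≤ f n) (n : ℤ) :
    dM f n = ⨆ r : ℕ, avg f (n - r) (n + r) := by
  unfold dM
  congr 1
  funext r
  unfold avg
  congr 1
  exact Finset.sum_congr rfl fun k _ => abs_of_nonneg (hf k)

lemma avg_le_dM (f : ℤ → ℝ) (hf : ∀ n, 0 ≤ f n) (B : ℝ) (hB : ∀ k, f k ≤ B)
    (n w : ℤ) (hw : 0 ≤ w) : avg f (n - w) (n + w) ≤ dM f n := by
  rw [dM_eq f hf]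
  have hbdd : BddAbove (Set.range fun r : ℕ => avg f (n - r) (n + r)) := by
    refine ⟨B, ?_⟩
    rintro _ ⟨r, rfl⟩
    exact avg_le_of_forall_le f B hB _ _ (by omega)
  have h := le_ciSup hbdd w.toNat
  rwa [Int.toNat_of_nonneg hw] at h

lemma sum_Icc_eq (f : ℤ → ℝ) (a b : ℤ) (hab : a ≤ b) :
    ∑ k ∈ Finset.Icc a b, f k = ((b - a + 1 : ℤ) : ℝ) * avg f a b := by
  have hpos : ((b - a + 1 : ℤ) : ℝ) ≠ 0 := by
    exact_mod_cast (by omega : (b - a + 1 : ℤ) ≠ 0)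
  rw [avg, mul_div_cancel₀ _ hpos]

lemma sum_Icc_split (f : ℤ → ℝ) (a b c : ℤ) (h1 : a ≤ b + 1) (h2 : b ≤ c) :
    ∑ k ∈ Finset.Icc a c, f k
      = ∑ k ∈ Finset.Icc a b, f k + ∑ k ∈ Finset.Icc (b + 1) c, f k := by
  have hu : Finset.Icc a c = Finset.Icc a b ∪ Finset.Icc (b + 1) c := by
    ext k; simp only [Finset.mem_Icc, Finset.mem_union]; omega
  have hd : Disjoint (Finset.Icc a b) (Finset.Icc (b + 1) c) := by
    rw [Finset.disjoint_left]
    intro k hk hk'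
    simp only [Finset.mem_Icc] at hk hk'
    omega
  rw [hu, Finset.sum_union hd]

lemma extract_left (f : ℤ → ℝ) (hf : ∀ n, 0 ≤ f n) (B : ℝ) (hB : ∀ k, f k ≤ B)
    (R E W : ℤ) (hRE : R < E) (hWd : E - R ≤ W)
    (havg : avg f (R - W) (R + W) = dM f R) (hME : dM f E ≤ dM f R) :
    ∃ s ∈ Finset.Icc (R - W) (2 * E - R - W - 1),
      dM f E + (dM f R - dM f E) / ((E - R : ℤ) : ℝ) * (W : ℝ) ≤ f s := by
  have hW0 : 0 < W := by omega
  have hsplit := sum_Icc_split f (R - W) (2 * E - R - W - 1) (R + W) (by omega) (by omega)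
  have hb1 : 2 * E - R - W - 1 + 1 = 2 * E - R - W := by ring
  rw [hb1] at hsplit
  have hsum1 : ∑ k ∈ Finset.Icc (R - W) (R + W), f k = ((2 * W + 1 : ℤ) : ℝ) * dM f R := by
    have h := sum_Icc_eq f (R - W) (R + W) (by omega)
    rw [havg] at h
    rw [h]
    congr 2
    ring
  have hsum2 : ∑ k ∈ Finset.Icc (2 * E - R - W) (R + W), f k
      ≤ ((2 * (W - (E - R)) + 1 : ℤ) : ℝ) * dM f E := by
    have h1 : 2 * E - R - W = E - (W - (E - R)) := by ring
    have h2 : R + W = E + (W - (E - R)) := by ring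
    have h3 := avg_le_dM f hf B hB E (W - (E - R)) (by omega)
    have h4 := sum_Icc_eq f (E - (W - (E - R))) (E + (W - (E - R))) (by omega)
    have hc : (E + (W - (E - R)) - (E - (W - (E - R))) + 1 : ℤ) = 2 * (W - (E - R)) + 1 := by
      ring
    rw [hc] at h4
    rw [h1, h2, h4]
    have hcn : (0 : ℝ) ≤ ((2 * (W - (E - R)) + 1 : ℤ) : ℝ) := by
      exact_mod_cast (by omega : (0:ℤ) ≤ 2 * (W - (E - R)) + 1)
    exact mul_le_mul_of_nonneg_left h3 hcn
  have hS : ((2 * W + 1 : ℤ) : ℝ) * dM f R - ((2 * (W - (E - R)) + 1 : ℤ) : ℝ) * dM f E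
      ≤ ∑ k ∈ Finset.Icc (R - W) (2 * E - R - W - 1), f k := by
    linarith
  set S := Finset.Icc (R - W) (2 * E - R - W - 1) with hSdef
  have hcard : (S.card : ℝ) = 2 * ((E : ℝ) - (R : ℝ)) := by
    have h1 : (S.card : ℤ) = 2 * (E - R) := by
      rw [hSdef, Int.card_Icc, Int.toNat_of_nonneg (by omega)]; ring
    exact_mod_cast h1
  have hne : S.Nonempty := Finset.nonempty_Icc.mpr (by omega)
  have hd : (0 : ℝ) < (E : ℝ) - (R : ℝ) := by
    have : (0:ℝ) < ((E - R : ℤ) : ℝ) := by exact_mod_cast (by omega : (0:ℤ) < E - R)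
    push_cast at this; linarith
  have hCsum : ∑ _k ∈ S, (dM f E + (dM f R - dM f E) / ((E - R : ℤ) : ℝ) * (W : ℝ))
      ≤ ∑ k ∈ S, f k := by
    rw [Finset.sum_const, nsmul_eq_mul, hcard]
    refine le_trans ?_ hS
    push_cast
    have hdd : (E : ℝ) - (R : ℝ) ≠ 0 := by linarith
    have hkey : 2 * ((E:ℝ) - R) * (dM f E + (dM f R - dM f E) / ((E:ℝ) - R) * (W:ℝ))
        = 2 * ((E:ℝ) - R) * dM f E + 2 * (W:ℝ) * (dM f R - dM f E) := by
      field_simp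
    rw [hkey]
    nlinarith [hME]
  obtain ⟨s, hsS, hsC⟩ := Finset.exists_le_of_sum_le hne hCsum
  exact ⟨s, hsS, hsC⟩

lemma extract_right (f : ℤ → ℝ) (hf : ∀ n, 0 ≤ f n) (B : ℝ) (hB : ∀ k, f k ≤ B)
    (R E W : ℤ) (hRE : E < R) (hWd : R - E ≤ W)
    (havg : avg f (R - W) (R + W) = dM f R) (hME : dM f E ≤ dM f R) :
    ∃ t ∈ Finset.Icc (2 * E - R + W + 1) (R + W),
      dM f E + (dM f R - dM f E) / ((R - E : ℤ) : ℝ) * (W : ℝ) ≤ f t := by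
  have hW0 : 0 < W := by omega
  have hsplit := sum_Icc_split f (R - W) (2 * E - R + W) (R + W) (by omega) (by omega)
  have hsum1 : ∑ k ∈ Finset.Icc (R - W) (R + W), f k = ((2 * W + 1 : ℤ) : ℝ) * dM f R := by
    have h := sum_Icc_eq f (R - W) (R + W) (by omega)
    rw [havg] at h
    rw [h]
    congr 2
    ring
  have hsum2 : ∑ k ∈ Finset.Icc (R - W) (2 * E - R + W), f k
      ≤ ((2 * (W - (R - E)) + 1 : ℤ) : ℝ) * dM f E := by
    have h1 : R - W = E - (W - (R - E)) := by ring
    have h2 : 2 * E - R + W = E + (W - (R - E)) := by ring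
    have h3 := avg_le_dM f hf B hB E (W - (R - E)) (by omega)
    have h4 := sum_Icc_eq f (E - (W - (R - E))) (E + (W - (R - E))) (by omega)
    have hc : (E + (W - (R - E)) - (E - (W - (R - E))) + 1 : ℤ) = 2 * (W - (R - E)) + 1 := by
      ring
    rw [hc] at h4
    rw [h1, h2, h4]
    have hcn : (0 : ℝ) ≤ ((2 * (W - (R - E)) + 1 : ℤ) : ℝ) := by
      exact_mod_cast (by omega : (0:ℤ) ≤ 2 * (W - (R - E)) + 1)
    exact mul_le_mul_of_nonneg_left h3 hcn
  have hS : ((2 * W + 1 : ℤ) : ℝ) * dM f R - ((2 * (W - (R - E)) + 1 : ℤ) : ℝ) * dM f E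
      ≤ ∑ k ∈ Finset.Icc (2 * E - R + W + 1) (R + W), f k := by
    linarith
  set S := Finset.Icc (2 * E - R + W + 1) (R + W) with hSdef
  have hcard : (S.card : ℝ) = 2 * ((R : ℝ) - (E : ℝ)) := by
    have h1 : (S.card : ℤ) = 2 * (R - E) := by
      rw [hSdef, Int.card_Icc, Int.toNat_of_nonneg (by omega)]; ring
    exact_mod_cast h1
  have hne : S.Nonempty := Finset.nonempty_Icc.mpr (by omega)
  have hd : (0 : ℝ) < (R : ℝ) - (E : ℝ) := by
    have : (0:ℝ) < ((R - E : ℤ) : ℝ) := by exact_mod_cast (by omega : (0:ℤ) < R - E)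
    push_cast at this; linarith
  have hCsum : ∑ _k ∈ S, (dM f E + (dM f R - dM f E) / ((R - E : ℤ) : ℝ) * (W : ℝ))
      ≤ ∑ k ∈ S, f k := by
    rw [Finset.sum_const, nsmul_eq_mul, hcard]
    refine le_trans ?_ hS
    push_cast
    have hdd : (R : ℝ) - (E : ℝ) ≠ 0 := by linarith
    have hkey : 2 * ((R:ℝ) - E) * (dM f E + (dM f R - dM f E) / ((R:ℝ) - E) * (W:ℝ))
        = 2 * ((R:ℝ) - E) * dM f E + 2 * (W:ℝ) * (dM f R - dM f E) := by
      field_simp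
    rw [hkey]
    nlinarith [hME]
  obtain ⟨t, htS, htC⟩ := Finset.exists_le_of_sum_le hne hCsum
  exact ⟨t, htS, htC⟩


/-- existence of the points `s_i, t_i` in the proof of Lemma 2. -/
theorem stmt7 (f : ℤ → ℝ) (hf : ∀ n, 0 ≤ f n) (hbv : BddVar f)
    (L x y : ℤ) (hL : 0 < L) (hLeven : Even L) (hxy : y = x + L)
    (m : ℕ) (hm : 1 ≤ m) (p r q ω : ℕ → ℤ)
    (hpk : ∀ i ∈ Finset.Icc 1 m, IsEssentialPeak f (p i) (r i) (q i))
    (hrad : ∀ i ∈ Finset.Icc 1 m, IsRadius f (r i) (ω i))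
    (hωlb : ∀ i ∈ Finset.Icc 1 m, 32 * L < ω i)
    (hωub : ∀ i ∈ Finset.Icc 1 m, ω i ≤ 64 * L)
    (hx : x ≤ p 1) (hy : q m ≤ y)
    (hchain : ∀ i ∈ Finset.Icc 1 (m - 1), q i ≤ p (i + 1))
    (e : ℕ → ℤ) (he1 : e 1 = p 1) (hem : e (m + 1) = q m)
    (he : ∀ i ∈ Finset.Icc 2 m,
      e i = if dM f (p i) ≤ dM f (q (i - 1)) then p i else q (i - 1)) :
    ∀ i ∈ Finset.Icc 1 m, ∃ s t : ℤ,
      x - 64 * L ≤ s ∧ s ≤ x - 30 * L ∧ y + 30 * L ≤ t ∧ t ≤ y + 64 * L ∧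
      f s ≥ dM f (e (i + 1)) +
        (dM f (r i) - dM f (e (i + 1))) / ((e (i + 1) - r i : ℤ) : ℝ) * (ω i : ℝ) ∧
      f t ≥ dM f (e i) +
        (dM f (r i) - dM f (e i)) / ((r i - e i : ℤ) : ℝ) * (ω i : ℝ) := by
  -- global bound on f
  set B : ℝ := f 0 + dVar f with hBdef
  have hB : ∀ k, f k ≤ B := fun k => f_le_bound f hbv k
  -- positions of peaks
  have hp_ge : ∀ i, 1 ≤ i → i ≤ m → x ≤ p i := by
    intro i
    induction i with
    | zero => omega
    | succ n ih =>
      intro h1 h2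
      rcases Nat.eq_zero_or_pos n with hn | hn
      · subst hn; exact hx
      · have hxn := ih hn (by omega)
        have hc := hchain n (by simp only [Finset.mem_Icc]; omega)
        obtain ⟨⟨ha, hb, _, _⟩, _⟩ := hpk n (by simp only [Finset.mem_Icc]; omega)
        omega
  have hq_le' : ∀ j i, 1 ≤ i → i + j = m → q i ≤ y := by
    intro j
    induction j with
    | zero =>
      intro i h1 h2
      have : i = m := by omega
      subst this; exact hy
    | succ n ih =>
      intro i h1 h2
      have hc := hchain i (by simp only [Finset.mem_Icc]; omega)
      obtain ⟨⟨ha, hb, _, _⟩, _⟩ := hpk (i + 1) (by simp only [Finset.mem_Icc]; omega)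
      have := ih (i + 1) (by omega) (by omega)
      omega
  have hq_le : ∀ i, 1 ≤ i → i ≤ m → q i ≤ y := fun i h1 h2 => hq_le' (m - i) i h1 (by omega)
  intro i hi
  simp only [Finset.mem_Icc] at hi
  obtain ⟨hi1, him⟩ := hi
  obtain ⟨⟨hpr, hrq, hMp, hMq⟩, _⟩ := hpk i (by simp only [Finset.mem_Icc]; omega)
  obtain ⟨hW0, havg, _⟩ := hrad i (by simp only [Finset.mem_Icc]; omega)
  have hW1 := hωlb i (by simp only [Finset.mem_Icc]; omega)
  have hW2 := hωub i (by simp only [Finset.mem_Icc]; omega)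
  have hpx := hp_ge i hi1 him
  have hqy := hq_le i hi1 him
  -- facts about E = e (i+1)
  have hE : r i < e (i + 1) ∧ e (i + 1) ≤ y ∧ dM f (e (i + 1)) ≤ dM f (r i) := by
    rcases eq_or_lt_of_le him with hieq | hilt
    · subst hieq
      rw [hem]
      exact ⟨hrq, hy, le_of_lt hMq⟩
    · have hie := he (i + 1) (by simp only [Finset.mem_Icc]; omega)
      simp only [Nat.add_sub_cancel] at hie
      have hc := hchain i (by simp only [Finset.mem_Icc]; omega)
      obtain ⟨⟨hpr', hrq', hMp', hMq'⟩, _⟩ := hpk (i + 1) (by simp only [Finset.mem_Icc]; omega)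
      have hqy' := hq_le (i + 1) (by omega) (by omega)
      by_cases hcmp : dM f (p (i + 1)) ≤ dM f (q i)
      · rw [hie, if_pos hcmp]
        exact ⟨by omega, by omega, le_trans hcmp (le_of_lt hMq)⟩
      · rw [hie, if_neg hcmp]
        exact ⟨hrq, hqy, le_of_lt hMq⟩
  -- facts about E' = e i
  have hE' : e i < r i ∧ x ≤ e i ∧ dM f (e i) ≤ dM f (r i) := by
    rcases eq_or_lt_of_le hi1 with hieq | hilt
    · rw [← hieq, he1]
      rw [← hieq] at hpr hMp
      exact ⟨hpr, by rw [← hieq] at hpx; omega, le_of_lt hMp⟩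
    · have hie := he i (by simp only [Finset.mem_Icc]; omega)
      have hii : i - 1 + 1 = i := by omega
      have hc := hchain (i - 1) (by simp only [Finset.mem_Icc]; omega)
      rw [hii] at hc
      obtain ⟨⟨hpr', hrq', hMp', hMq'⟩, _⟩ := hpk (i - 1) (by simp only [Finset.mem_Icc]; omega)
      have hpx' := hp_ge (i - 1) (by omega) (by omega)
      by_cases hcmp : dM f (p i) ≤ dM f (q (i - 1))
      · rw [hie, if_pos hcmp]
        exact ⟨hpr, hpx, le_of_lt hMp⟩
      · rw [hie, if_neg hcmp]
        push_neg at hcmp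
        exact ⟨by omega, by omega, le_of_lt (lt_trans hcmp hMp)⟩
  obtain ⟨hE1, hE2, hE3⟩ := hE
  obtain ⟨hE1', hE2', hE3'⟩ := hE'
  obtain ⟨s, hsmem, hsineq⟩ :=
    extract_left f hf B hB (r i) (e (i + 1)) (ω i) hE1 (by omega) havg hE3
  obtain ⟨t, htmem, htineq⟩ :=
    extract_right f hf B hB (r i) (e i) (ω i) hE1' (by omega) havg hE3'
  simp only [Finset.mem_Icc] at hsmem htmem
  exact ⟨s, t, by omega, by omega, by omega, by omega, hsineq, htineq⟩

end
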